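/- arXiv:1306.3443 — 9 statements merged into one kernel-verified Lean document; each statement's English description precedes it below -/
import Mathlib

section
/- Cohn-type irreducibility criterion: let f(t) = t^m + a_{m-1}t^{m-1} + ... + a_1 t + a_0 ∈ ℤ[t] be monic of degree m ≥ 1, and let H = max over 0 ≤ i ≤ m-1 of |a_i|. If there exists an integer n ≥ H + 2 such that f(n) is prime, then f is irreducible in ℤ[t]. -/
open Polynomial

/-!
By Cauchy's bound every complex root `z` of `f` has `‖z‖ < H + 1 ≤ n - 1`, so `‖n - z‖ > 1`.
For a monic factor `g` of `f`, `g(n) = ∏ (n - z)` over the roots of `g`, hence `|g(n)| > 1`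
unless `g` is constant. As `f(n) = g(n) h(n)` is prime, one of `g(n)`, `h(n)` is `±1`, so in any
factorisation of `f` into monic polynomials one factor has degree `0`.
-/

theorem Multiset.one_lt_norm_prod {α : Type*} [NormedField α] {s : Multiset α}
    (hs : s ≠ 0) (h : ∀ a ∈ s, 1 < ‖a‖) : 1 < ‖s.prod‖ := by
  induction s using Multiset.induction_on with
  | empty => exact absurd rfl hs
  | cons a t ih =>
    rw [Multiset.prod_cons, norm_mul]
    have ha := h a (Multiset.mem_cons_self a t)
    rcases eq_or_ne t 0 with rfl | ht
    · simpa using ha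
    · exact one_lt_mul_of_lt_of_le ha
        (ih ht fun b hb => h b (Multiset.mem_cons_of_mem hb)).le

namespace Polynomial

theorem norm_lt_of_aeval_eq_zero_of_natAbs_coeff_le {f : ℤ[X]} (hf : f.Monic) {H : ℕ}
    (hH : ∀ i < f.natDegree, (f.coeff i).natAbs ≤ H) {z : ℂ} (hz : aeval z f = 0) :
    ‖z‖ < H + 1 := by
  have hroot : (f.map (algebraMap ℤ ℂ)).IsRoot z := by rwa [IsRoot, eval_map_algebraMap]
  have hbound : cauchyBound (f.map (algebraMap ℤ ℂ)) ≤ H + 1 := by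
    rw [cauchyBound, (hf.map _).leadingCoeff, nnnorm_one, div_one, hf.natDegree_map]
    gcongr
    refine Finset.sup_le fun i hi => ?_
    rw [coeff_map, algebraMap_int_eq, eq_intCast, ← NNReal.coe_le_coe, coe_nnnorm,
      ← norm_natAbs, Complex.norm_natCast]
    exact_mod_cast hH i (Finset.mem_range.mp hi)
  exact_mod_cast (hroot.norm_lt_cauchyBound (hf.map _).ne_zero).trans_le hbound

theorem one_lt_norm_aeval_of_one_lt_norm_sub_aroots {R : Type*} [CommRing R] [Algebra R ℂ]
    {g : R[X]} (hg : g.Monic) (hdeg : 0 < g.natDegree) {x : ℂ}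
    (hx : ∀ r ∈ g.aroots ℂ, 1 < ‖x - r‖) : 1 < ‖aeval x g‖ := by
  have hsplits : (g.map (algebraMap R ℂ)).Splits := IsAlgClosed.splits _
  have hroots : g.aroots ℂ ≠ 0 := by
    rw [← Multiset.card_pos, aroots, ← hsplits.natDegree_eq_card_roots, hg.natDegree_map]
    exact hdeg
  rw [hsplits.aeval_eq_prod_aroots_of_monic hg]
  refine Multiset.one_lt_norm_prod (by simpa using hroots) fun a ha => ?_
  obtain ⟨r, hr, rfl⟩ := Multiset.mem_map.mp ha
  exact hx r hr

theorem natDegree_eq_zero_of_isUnit_eval_of_dvd {f g : ℤ[X]} (hf : f.Monic) {H : ℕ}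
    (hH : ∀ i < f.natDegree, (f.coeff i).natAbs ≤ H) {n : ℤ} (hn : (H : ℤ) + 2 ≤ n)
    (hg : g.Monic) (hgf : g ∣ f) (hunit : IsUnit (g.eval n)) : g.natDegree = 0 := by
  by_contra hdeg
  have hfar : ∀ r ∈ g.aroots ℂ, 1 < ‖(n : ℂ) - r‖ := by
    intro r hr
    have hrf : aeval r f = 0 := by
      obtain ⟨h, rfl⟩ := hgf
      rw [map_mul, (mem_aroots.mp hr).2, zero_mul]
    have hr_lt := norm_lt_of_aeval_eq_zero_of_natAbs_coeff_le hf hH hrf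
    have hn' : (H : ℝ) + 2 ≤ n := by exact_mod_cast hn
    calc (1 : ℝ) < n - ‖r‖ := by linarith
      _ ≤ ‖(n : ℂ)‖ - ‖r‖ := by rw [Complex.norm_intCast]; gcongr; exact le_abs_self _
      _ ≤ ‖(n : ℂ) - r‖ := norm_sub_norm_le _ _
  have hgt := one_lt_norm_aeval_of_one_lt_norm_sub_aroots hg (Nat.pos_of_ne_zero hdeg) hfar
  have heval : aeval (n : ℂ) g = ((g.eval n : ℤ) : ℂ) := by simp [aeval_def, eval₂_eq_eval_map]
  rcases Int.isUnit_iff.mp hunit with h | h <;> simp [heval, h] at hgt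

end Polynomial

theorem stmt_6_general (f : Polynomial ℤ) (m : ℕ) (hmonic : f.Monic)
    (hdeg : f.natDegree = m) (n : ℤ)
    (hn : (((Finset.range m).sup fun i => (f.coeff i).natAbs : ℕ) : ℤ) + 2 ≤ n)
    (hprime : Prime (f.eval n)) :
    Irreducible f := by
  set H := (Finset.range m).sup fun i => (f.coeff i).natAbs
  have hH : ∀ i < f.natDegree, (f.coeff i).natAbs ≤ H := fun i hi =>
    Finset.le_sup (f := fun i => (f.coeff i).natAbs) (Finset.mem_range.mpr (hdeg ▸ hi))
  rw [hmonic.irreducible_iff_natDegree]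
  refine ⟨fun hf1 => hprime.not_isUnit (by simp [hf1]), fun g h hg hh hgh => ?_⟩
  rcases hprime.irreducible.isUnit_or_isUnit (by rw [← hgh, eval_mul]) with hu | hu
  · exact .inl <| natDegree_eq_zero_of_isUnit_eval_of_dvd hmonic hH hn hg (Dvd.intro h hgh) hu
  · exact .inr <|
      natDegree_eq_zero_of_isUnit_eval_of_dvd hmonic hH hn hh (Dvd.intro_left g hgh) hu

theorem stmt_6 (f : Polynomial ℤ) (m : ℕ) (hm : 1 ≤ m) (hmonic : f.Monic)
    (hdeg : f.natDegree = m) (n : ℤ)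
    (hn : (((Finset.range m).sup fun i => (f.coeff i).natAbs : ℕ) : ℤ) + 2 ≤ n)
    (hprime : Prime (f.eval n)) :
    Irreducible f :=
  stmt_6_general f m hmonic hdeg n hn hprime
end

section
/- The 5×5 matrix G with G_{ii} = 1, G_{12} = G_{21} = G_{34} = G_{43} = -cos(π/5), G_{14} = G_{41} = G_{23} = G_{32} = G_{25} = G_{52} = G_{45} = G_{54} = -1/2, and all other entries 0, has signature (4,1): it has exactly one negative eigenvalue and four positive eigenvalues. -/
open Real Matrix

noncomputable def G : Matrix (Fin 5) (Fin 5) ℝ :=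
  !![1, -Real.cos (Real.pi / 5), 0, -(1 / 2), 0;
     -Real.cos (Real.pi / 5), 1, -(1 / 2), 0, -(1 / 2);
     0, -(1 / 2), 1, -Real.cos (Real.pi / 5), 0;
     -(1 / 2), 0, -Real.cos (Real.pi / 5), 1, -(1 / 2);
     0, -(1 / 2), 0, -(1 / 2), 1]

/-!
The quadratic form `q x = xᵀ G x` takes the value `1 - 4 cos (π / 5) < 0` at the all-ones vector,
so `G` has a negative eigenvalue. On the hyperplane `x₁ + x₃ = 0` (nodes 2 and 4 of the graph) the
form is positive definite: there `2 q x - ‖x‖²` is a sum of squares. The eigenvectors with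
nonpositive eigenvalues span a subspace on which `q ≤ 0`; it meets that hyperplane only in `0`,
so it is at most one-dimensional. Hence exactly one eigenvalue is negative and the other four are
positive.
-/

open Finset
open scoped ComplexOrder

namespace Matrix.IsHermitian

variable {𝕜 n : Type*} [RCLike 𝕜] [Fintype n] [DecidableEq n] {A : Matrix n n 𝕜}
  (hA : A.IsHermitian)

include hA in
theorem exists_eigenvalues_neg_of_dotProduct_mulVec_neg {x : n → 𝕜}
    (hx : star x ⬝ᵥ (A *ᵥ x) < 0) : ∃ i, hA.eigenvalues i < 0 := by
  by_contra! h
  exact (hx.trans_le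
    ((hA.posSemidef_iff_eigenvalues_nonneg.mpr h).dotProduct_mulVec_nonneg x)).false

theorem dotProduct_mulVec_sum_smul_eigenvectorBasis (s : Finset n) (c : n → 𝕜) :
    star (∑ i ∈ s, c i • ⇑(hA.eigenvectorBasis i)) ⬝ᵥ
        (A *ᵥ ∑ i ∈ s, c i • ⇑(hA.eigenvectorBasis i)) =
      ∑ i ∈ s, ((‖c i‖ ^ 2 * hA.eigenvalues i : ℝ) : 𝕜) := by
  simp only [mulVec_sum, mulVec_smul, mulVec_eigenvectorBasis, star_sum, star_smul,
    sum_dotProduct, dotProduct_sum, smul_dotProduct, dotProduct_smul]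
  simp only [dotProduct_comm (star _), ← EuclideanSpace.inner_eq_star_dotProduct,
    orthonormal_iff_ite.mp hA.eigenvectorBasis.orthonormal]
  refine sum_congr rfl fun i hi => ?_
  simp only [smul_eq_mul, mul_ite, mul_one, mul_zero, sum_ite_eq', if_pos hi,
    RCLike.real_smul_eq_coe_mul, RCLike.ofReal_mul, RCLike.ofReal_pow, RCLike.star_def]
  rw [← RCLike.mul_conj]
  ring

theorem card_eigenvalues_nonpos_add_finrank_le {V : Submodule 𝕜 (n → 𝕜)}
    (hV : ∀ x ∈ V, x ≠ 0 → 0 < star x ⬝ᵥ (A *ᵥ x)) :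
    #{i | hA.eigenvalues i ≤ 0} + Module.finrank 𝕜 V ≤ Fintype.card n := by
  set s : Finset n := {i | hA.eigenvalues i ≤ 0}
  set v : n → n → 𝕜 := fun i => ⇑(hA.eigenvectorBasis i)
  have hv : LinearIndependent 𝕜 v :=
    hA.eigenvectorBasis.orthonormal.linearIndependent.map'
      (WithLp.linearEquiv 2 𝕜 (n → 𝕜)).toLinearMap (LinearEquiv.ker _)
  have hspan_finrank : Module.finrank 𝕜 (Submodule.span 𝕜 (v '' s)) = #s := by
    rw [Set.image_eq_range]
    exact (finrank_span_eq_card (hv.comp _ Subtype.val_injective)).trans (Fintype.card_coe s)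
  have hspan_nonpos : ∀ x ∈ Submodule.span 𝕜 (v '' s), star x ⬝ᵥ (A *ᵥ x) ≤ 0 := by
    intro x hx
    obtain ⟨l, hl, rfl⟩ := Finsupp.mem_span_image_iff_linearCombination 𝕜 |>.mp hx
    rw [Finsupp.linearCombination_apply, Finsupp.sum,
      dotProduct_mulVec_sum_smul_eigenvectorBasis]
    refine sum_nonpos fun i hi => ?_
    have hi_nonpos : hA.eigenvalues i ≤ 0 := by simpa [s] using hl hi
    exact_mod_cast mul_nonpos_of_nonneg_of_nonpos (by positivity) hi_nonpos
  have hdisjoint : Disjoint V (Submodule.span 𝕜 (v '' s)) := by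
    rw [Submodule.disjoint_def]
    intro x hxV hx_span
    by_contra hx
    exact ((hV x hxV hx).trans_le (hspan_nonpos x hx_span)).false
  calc #s + Module.finrank 𝕜 V
      = Module.finrank 𝕜 V + Module.finrank 𝕜 (Submodule.span 𝕜 (v '' s)) := by
        rw [hspan_finrank, add_comm]
    _ ≤ Fintype.card n := by
        simpa using Submodule.finrank_add_finrank_le_of_disjoint hdisjoint

theorem card_eigenvalues_nonpos_le_one {φ : Module.Dual 𝕜 (n → 𝕜)} (hφ : φ ≠ 0)
    (hpos : ∀ x ∈ LinearMap.ker φ, x ≠ 0 → 0 < star x ⬝ᵥ (A *ᵥ x)) :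
    #{i | hA.eigenvalues i ≤ 0} ≤ 1 := by
  have hcard := hA.card_eigenvalues_nonpos_add_finrank_le hpos
  have hker := Module.Dual.finrank_ker_add_one_of_ne_zero hφ
  rw [Module.finrank_fintype_fun_eq_card] at hker
  omega

theorem card_eigenvalues_neg_eq_one_and_card_eigenvalues_pos (hneg : ∃ i, hA.eigenvalues i < 0)
    (hnonpos : #{i | hA.eigenvalues i ≤ 0} ≤ 1) :
    #{i | hA.eigenvalues i < 0} = 1 ∧ #{i | 0 < hA.eigenvalues i} = Fintype.card n - 1 := by
  obtain ⟨i₀, hi₀⟩ := hneg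
  have hneg_le_nonpos : #{i | hA.eigenvalues i < 0} ≤ #{i | hA.eigenvalues i ≤ 0} :=
    card_le_card (monotone_filter_right _ fun _ _ => le_of_lt)
  have hneg_pos : 0 < #{i | hA.eigenvalues i < 0} := card_pos.mpr ⟨i₀, by simpa using hi₀⟩
  have hsplit := card_filter_add_card_filter_not (s := univ) (0 < hA.eigenvalues ·)
  simp only [not_lt, card_univ] at hsplit
  omega

end Matrix.IsHermitian

lemma dotProduct_mulVec_G (x : Fin 5 → ℝ) :
    x ⬝ᵥ (G *ᵥ x) = x 0 ^ 2 + x 1 ^ 2 + x 2 ^ 2 + x 3 ^ 2 + x 4 ^ 2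
      - 2 * cos (π / 5) * (x 0 * x 1 + x 2 * x 3)
      - (x 0 * x 3 + x 1 * x 2 + x 1 * x 4 + x 3 * x 4) := by
  simp only [G, dotProduct, mulVec, Fin.sum_univ_five, of_apply, cons_val', cons_val_fin_one,
    cons_val_zero, cons_val_one, Matrix.cons_val]
  ring

lemma one_fourth_lt_cos_pi_div_five : 1 / 4 < cos (π / 5) := by
  rw [cos_pi_div_five]
  linarith [Real.sqrt_pos.mpr (show (0 : ℝ) < 5 by norm_num)]

lemma dotProduct_mulVec_G_one_neg : (1 : Fin 5 → ℝ) ⬝ᵥ (G *ᵥ 1) < 0 := by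
  rw [dotProduct_mulVec_G]
  simp only [Pi.one_apply]
  linarith [one_fourth_lt_cos_pi_div_five]

lemma dotProduct_mulVec_G_pos {x : Fin 5 → ℝ} (hx : x 1 + x 3 = 0) (hx0 : x ≠ 0) :
    0 < x ⬝ᵥ (G *ᵥ x) := by
  have h3 : x 3 = -x 1 := by linarith
  set a := 2 * cos (π / 5) - 1
  have ha : 0 ≤ 1 - a ^ 2 := by
    nlinarith [one_fourth_lt_cos_pi_div_five, cos_le_one (π / 5)]
  have hnorm : 0 < x ⬝ᵥ x := by simpa using dotProduct_self_star_pos_iff.mpr hx0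
  -- with `x₃ = -x₁` the form is `x₀² + 2x₁² + x₂² + x₄² - a x₁ (x₀ - x₂)`
  have hbound : x ⬝ᵥ x ≤ 2 * (x ⬝ᵥ (G *ᵥ x)) := by
    rw [dotProduct_mulVec_G]
    simp only [dotProduct, Fin.sum_univ_five, h3]
    nlinarith [sq_nonneg (x 0 - a * x 1), sq_nonneg (x 2 + a * x 1),
      mul_nonneg ha (sq_nonneg (x 1)), sq_nonneg (x 4)]
  linarith

theorem stmt_8 (hG : G.IsHermitian) :
    (Finset.univ.filter fun i => hG.eigenvalues i < 0).card = 1 ∧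
    (Finset.univ.filter fun i => 0 < hG.eigenvalues i).card = 4 := by
  have hneg := hG.exists_eigenvalues_neg_of_dotProduct_mulVec_neg dotProduct_mulVec_G_one_neg
  let φ : Module.Dual ℝ (Fin 5 → ℝ) :=
    LinearMap.proj (R := ℝ) (φ := fun _ : Fin 5 => ℝ) 1 + LinearMap.proj 3
  have hφ : φ ≠ 0 := fun h => by simpa [φ] using LinearMap.congr_fun h (Pi.single 1 1)
  have hnonpos := hG.card_eigenvalues_nonpos_le_one hφ fun x hx hx0 =>
    dotProduct_mulVec_G_pos (by simpa [φ] using hx) hx0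
  exact hG.card_eigenvalues_neg_eq_one_and_card_eigenvalues_pos hneg hnonpos
end

section
/- The determinant of the 5×5 matrix G (with G_{ii}=1, G_{12}=G_{21}=G_{34}=G_{43}=-cos(π/5), G_{14}=G_{41}=G_{23}=G_{32}=G_{25}=G_{52}=G_{45}=G_{54}=-1/2, other entries 0) is negative. -/
/-!
Cofactor expansion gives `det G = c⁴ - 2c² - c/2 + 3/16` with `c = cos (π/5)`. Since `2c` is the
golden ratio, `c² = c/2 + 1/4`, which reduces the quartic to `-(9c/8 + 3/16)`, negative as `c > 0`.
-/

open Real Matrix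

noncomputable def gramMatrix (c : ℝ) : Matrix (Fin 5) (Fin 5) ℝ :=
  !![1, -c, 0, -(1 / 2), 0;
     -c, 1, -(1 / 2), 0, -(1 / 2);
     0, -(1 / 2), 1, -c, 0;
     -(1 / 2), 0, -c, 1, -(1 / 2);
     0, -(1 / 2), 0, -(1 / 2), 1]

theorem det_gramMatrix (c : ℝ) :
    (gramMatrix c).det = c ^ 4 - 2 * c ^ 2 - c / 2 + 3 / 16 := by
  simp [gramMatrix, det_succ_row_zero, Fin.sum_univ_succ, Fin.succAbove]
  ring

theorem cos_pi_div_five_sq : cos (π / 5) ^ 2 = cos (π / 5) / 2 + 1 / 4 := by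
  rw [cos_pi_div_five]
  linear_combination (1 / 16 : ℝ) * sq_sqrt (show (0 : ℝ) ≤ 5 by norm_num)

theorem det_G : G.det = -(9 * cos (π / 5) / 8 + 3 / 16) := by
  rw [show G = gramMatrix (cos (π / 5)) from rfl, det_gramMatrix]
  linear_combination (cos (π / 5) ^ 2 + cos (π / 5) / 2 - 3 / 2) * cos_pi_div_five_sq

theorem stmt_9 : G.det < 0 := by
  have hc : 0 < cos (π / 5) := by
    rw [cos_pi_div_five]
    positivity
  rw [det_G]
  linarith
end

section
/- For every palindromic polynomial f ∈ ℤ[t] of even degree n ≥ 2 with f(1) ≠ 0 and f(-1) ≠ 0, the expression g(t) = (t - i)^n · f((t+i)/(t-i)) defines a polynomial with integer coefficients of degree n which is an even function, i.e. g(-t) = g(t). -/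
/-!
Let `F(u, v) = ∑ aₖ uᵏ vⁿ⁻ᵏ` be the degree-`n` homogenization of `f`; then
`g(t) = F(t + i, t - i)`, a polynomial with Gaussian integer coefficients.
Palindromicity of `f` makes `F` symmetric, and complex conjugation swaps `t + i` and `t - i`,
so it fixes `g`: the coefficients of `g` are integers. For even `n`, `F(-u, -v) = F(u, v)`,
and `(-t + i, -t - i) = -(t - i, t + i)` gives `g(-t) = g(t)`. Both linear forms are monic,
so the coefficient of `tⁿ` in `g` is `F(1, 1) = f(1) ≠ 0`.
-/

open Polynomial Finset.HasAntidiagonal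

namespace Polynomial

section Homogenize

variable {R A : Type*} [CommSemiring R] [CommSemiring A] [Algebra R A]

theorem aeval_homogenize (p : R[X]) (n : ℕ) (x : Fin 2 → A) :
    MvPolynomial.aeval x (p.homogenize n) =
      ∑ kl ∈ antidiagonal n, p.coeff kl.1 • (x 0 ^ kl.1 * x 1 ^ kl.2) := by
  simp [homogenize, MvPolynomial.aeval_monomial, Algebra.smul_def]

theorem aeval_homogenize_swap {p : R[X]} {n : ℕ} (hp : p.reflect n = p) (x : Fin 2 → A) :
    MvPolynomial.aeval ![x 1, x 0] (p.homogenize n) = MvPolynomial.aeval x (p.homogenize n) := by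
  rw [aeval_homogenize, aeval_homogenize, ← Finset.Nat.sum_antidiagonal_swap]
  refine Finset.sum_congr rfl fun kl hkl => ?_
  rw [mem_antidiagonal] at hkl
  have hcoeff : p.coeff kl.2 = p.coeff kl.1 := by
    nth_rewrite 1 [← hp]
    rw [coeff_reflect, revAt_le (by omega)]
    congr 1
    omega
  simp [hcoeff, mul_comm]

theorem aeval_homogenize_smul (p : R[X]) (n : ℕ) (c : A) (x : Fin 2 → A) :
    MvPolynomial.aeval (c • x) (p.homogenize n) =
      c ^ n * MvPolynomial.aeval x (p.homogenize n) := by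
  simp only [aeval_homogenize, Finset.mul_sum, Pi.smul_apply, smul_eq_mul]
  refine Finset.sum_congr rfl fun kl hkl => ?_
  rw [← mem_antidiagonal.mp hkl, mul_smul_comm]
  ring_nf

theorem aeval_homogenize_of_ne_zero {K : Type*} [Field K] [Algebra R K] {p : R[X]} {n : ℕ}
    (hp : p.natDegree ≤ n) (x : Fin 2 → K) (hx : x 1 ≠ 0) :
    MvPolynomial.aeval x (p.homogenize n) = x 1 ^ n * aeval (x 0 / x 1) p := by
  rw [MvPolynomial.aeval_def, ← MvPolynomial.eval_map, ← homogenize_map,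
    eval_homogenize (natDegree_map_le.trans hp) x hx, eval_map, ← aeval_def, mul_comm]

variable [Nontrivial A]

theorem monic_X_add_C_pow_mul_X_add_C_pow (a b : A) (k l : ℕ) :
    ((X + C a) ^ k * (X + C b) ^ l).Monic ∧
      ((X + C a) ^ k * (X + C b) ^ l).natDegree = k + l := by
  have ha := (monic_X_add_C a).pow k
  have hb := (monic_X_add_C b).pow l
  refine ⟨ha.mul hb, ?_⟩
  rw [ha.natDegree_mul hb, (monic_X_add_C a).natDegree_pow, (monic_X_add_C b).natDegree_pow,
    natDegree_X_add_C, natDegree_X_add_C, mul_one, mul_one]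

theorem natDegree_aeval_homogenize_X_add_C_le (p : R[X]) (n : ℕ) (a b : A) :
    (MvPolynomial.aeval ![X + C a, X + C b] (p.homogenize n)).natDegree ≤ n := by
  rw [aeval_homogenize]
  refine natDegree_sum_le_of_forall_le _ _ fun kl hkl => ?_
  rw [← mem_antidiagonal.mp hkl]
  exact (natDegree_smul_le _ _).trans (monic_X_add_C_pow_mul_X_add_C_pow a b _ _).2.le

theorem coeff_aeval_homogenize_X_add_C {p : R[X]} {n : ℕ} (hp : p.natDegree ≤ n) (a b : A) :
    (MvPolynomial.aeval ![X + C a, X + C b] (p.homogenize n)).coeff n =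
      algebraMap R A (p.eval 1) := by
  have hterm : ∀ kl ∈ antidiagonal n,
      (p.coeff kl.1 • ((X + C a) ^ kl.1 * (X + C b) ^ kl.2)).coeff n =
        algebraMap R A (p.coeff kl.1) := by
    intro kl hkl
    obtain ⟨hmonic, hdeg⟩ := monic_X_add_C_pow_mul_X_add_C_pow a b kl.1 kl.2
    rw [coeff_smul, ← mem_antidiagonal.mp hkl, ← hdeg, hmonic.coeff_natDegree,
      Algebra.smul_def, mul_one]
  rw [aeval_homogenize, finsetSum_coeff]
  simp only [Matrix.cons_val_zero, Matrix.cons_val_one]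
  rw [Finset.sum_congr rfl hterm, eval_eq_sum_range' (Nat.lt_succ_of_le hp), map_sum,
    Finset.Nat.sum_antidiagonal_eq_sum_range_succ_mk]
  simp

end Homogenize

theorem exists_map_intCast_eq_of_map_star_eq {d : ℤ} {p : (ℤ√d)[X]}
    (hp : p.map (starRingEnd (ℤ√d)) = p) : ∃ q : ℤ[X], q.map (Int.castRingHom (ℤ√d)) = p := by
  refine (mem_lifts p).mp ((lifts_iff_coeff_lifts p).mpr fun k => ⟨(p.coeff k).re, ?_⟩)
  have him := congrArg (fun p => (p.coeff k).im) hp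
  simp only [coeff_map, starRingEnd_apply, Zsqrtd.im_star] at him
  ext <;> simp; omega

end Polynomial

theorem MvPolynomial.ringHom_aeval_int {σ A B : Type*} [CommRing A] [CommRing B] [Algebra ℤ A]
    [Algebra ℤ B] (ψ : A →+* B) (x : σ → A) (F : MvPolynomial σ ℤ) :
    ψ (aeval x F) = aeval (ψ ∘ x) F := by
  rw [aeval_def, aeval_def, hom_eval₂]
  congr 1
  exact RingHom.ext_int _ _

namespace GaussianInt

open Zsqrtd

/-- The paper's `g(t) = (t - i)ⁿ f((t + i)/(t - i))`, as a polynomial over `ℤ[i]`. -/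
noncomputable def cayleyPoly (f : ℤ[X]) (n : ℕ) : GaussianInt[X] :=
  MvPolynomial.aeval ![X + C sqrtd, X - C sqrtd] (f.homogenize n)

theorem star_sqrtd : star (sqrtd : GaussianInt) = -sqrtd := by
  ext <;> simp

theorem toComplex_sqrtd : toComplex sqrtd = Complex.I := by
  simp [toComplex_def]

theorem cayleyPoly_eq_aeval_X_add_C (f : ℤ[X]) (n : ℕ) :
    cayleyPoly f n = MvPolynomial.aeval ![X + C sqrtd, X + C (-sqrtd)] (f.homogenize n) := by
  rw [cayleyPoly, C_neg, ← sub_eq_add_neg]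

variable {f : ℤ[X]} {n : ℕ}

theorem map_star_cayleyPoly (hf : f.reflect n = f) :
    (cayleyPoly f n).map (starRingEnd GaussianInt) = cayleyPoly f n := by
  rw [cayleyPoly, ← coe_mapRingHom, MvPolynomial.ringHom_aeval_int]
  convert aeval_homogenize_swap hf _ using 2
  ext j : 1
  fin_cases j <;> simp [starRingEnd_apply, star_sqrtd, sub_eq_add_neg]

theorem cayleyPoly_comp_neg_X (hf : f.reflect n = f) (hn : Even n) :
    (cayleyPoly f n).comp (-X) = cayleyPoly f n := by
  rw [cayleyPoly, ← coe_compRingHom_apply, MvPolynomial.ringHom_aeval_int]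
  have hneg : ⇑(compRingHom (-X)) ∘ ![X + C sqrtd, X - C sqrtd] =
      (-1 : GaussianInt[X]) • ![X - C (sqrtd : GaussianInt), X + C sqrtd] := by
    ext j : 1
    fin_cases j <;> simp <;> abel
  rw [hneg, aeval_homogenize_smul, hn.neg_one_pow, one_mul]
  exact aeval_homogenize_swap hf ![X + C sqrtd, X - C sqrtd]

theorem natDegree_cayleyPoly (hf : f.natDegree ≤ n) (h1 : f.eval 1 ≠ 0) :
    (cayleyPoly f n).natDegree = n := by
  rw [cayleyPoly_eq_aeval_X_add_C]
  refine le_antisymm (natDegree_aeval_homogenize_X_add_C_le f n _ _)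
    (le_natDegree_of_ne_zero ?_)
  rw [coeff_aeval_homogenize_X_add_C hf, eq_intCast]
  exact_mod_cast h1

theorem eval₂_toComplex_cayleyPoly (hf : f.natDegree ≤ n) {t : ℂ} (ht : t ≠ Complex.I) :
    (cayleyPoly f n).eval₂ toComplex t =
      (t - Complex.I) ^ n * aeval ((t + Complex.I) / (t - Complex.I)) f := by
  have hx : ⇑(eval₂RingHom toComplex t) ∘ ![X + C sqrtd, X - C sqrtd] =
      ![t + Complex.I, t - Complex.I] := by
    ext j : 1
    fin_cases j <;> simp [toComplex_sqrtd]
  rw [cayleyPoly, ← coe_eval₂RingHom, MvPolynomial.ringHom_aeval_int, hx,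
    aeval_homogenize_of_ne_zero hf _ (sub_ne_zero.mpr ht)]
  simp

end GaussianInt

open GaussianInt in
theorem stmt_11_general (f : Polynomial ℤ) (n : ℕ) (hdeg : f.natDegree = n)
    (heven : Even n) (hpal : f.reverse = f)
    (h1 : f.eval 1 ≠ 0) :
    ∃ g : Polynomial ℤ, g.natDegree = n ∧ g.comp (-X) = g ∧
      ∀ t : ℂ, t ≠ Complex.I →
        Polynomial.aeval t g
          = (t - Complex.I) ^ n * Polynomial.aeval ((t + Complex.I) / (t - Complex.I)) f := by
  have hrefl : f.reflect n = f := hdeg ▸ hpal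
  obtain ⟨g, hg⟩ := exists_map_intCast_eq_of_map_star_eq (map_star_cayleyPoly hrefl)
  have hinj : Function.Injective (Int.castRingHom GaussianInt) := Int.cast_injective
  refine ⟨g, ?_, ?_, fun t ht => ?_⟩
  · rw [← natDegree_map_eq_of_injective hinj, hg, natDegree_cayleyPoly hdeg.le h1]
  · refine map_injective _ hinj ?_
    rw [map_comp, hg, Polynomial.map_neg, map_X, cayleyPoly_comp_neg_X hrefl heven]
  · rw [← eval₂_toComplex_cayleyPoly hdeg.le ht, ← hg, eval₂_map, aeval_def]
    congr 1
    exact RingHom.ext_int _ _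

theorem stmt_11 (f : Polynomial ℤ) (n : ℕ) (hdeg : f.natDegree = n)
    (hn : 2 ≤ n) (heven : Even n) (hpal : f.reverse = f)
    (h1 : f.eval 1 ≠ 0) (hm1 : f.eval (-1) ≠ 0) :
    ∃ g : Polynomial ℤ, g.natDegree = n ∧ g.comp (-X) = g ∧
      ∀ t : ℂ, t ≠ Complex.I →
        Polynomial.aeval t g
          = (t - Complex.I) ^ n * Polynomial.aeval ((t + Complex.I) / (t - Complex.I)) f :=
  stmt_11_general f n hdeg heven hpal h1
end

section
/- Let f ∈ ℤ[t] be palindromic of even degree n ≥ 2 with f(±1) ≠ 0, and let g(t) = (t-i)^n f((t+i)/(t-i)), viewed as a polynomial in u = t². Then f has exactly 2k roots (with multiplicity) on the unit circle if and only if g(u) has exactly k positive real roots, and f has exactly 2ℓ real roots if and only if g(u) has exactly ℓ negative real roots. -/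
/-!
The substitution `z = (t + i)/(t - i)` has inverse `t = i(z + 1)/(z - 1)`, and
`(t - i)((t + i)/(t - i) - z) = (1 - z)(t - i(z + 1)/(z - 1))`. Hence `g(t²)` is a nonzero
constant times `∏ (t - i(z + 1)/(z - 1))` over the roots `z` of `f`, so the roots of `g(t²)` are
the images of the roots of `f` under this Möbius map, which sends the unit circle onto the real
line and the real line onto the imaginary axis. The roots of `g(t²)` are also the pairs `±√u`
over the roots `u` of `g`, and `u ≠ 0` since `g(0) = (-i)ⁿ f(-1)`; such a pair is real exactly
when `u > 0` and imaginary exactly when `u < 0`.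
-/

open Polynomial

theorem Multiset.sum_map_ite_eq_card_filter_nsmul {α M : Type*} [AddCommMonoid M]
    (s : Multiset α) (q : α → Prop) [DecidablePred q] (c : M) :
    (s.map fun a => if q a then c else 0).sum = (s.filter q).card • c := by
  induction s using Multiset.induction_on with
  | empty => simp
  | cons a s ih => by_cases h : q a <;> simp [h, ih, add_nsmul, add_comm]

namespace Polynomial

variable {K : Type*} [Field K]

theorem roots_comp_X_pow [IsAlgClosed K] (G : K[X]) {n : ℕ} (hn : 0 < n) :
    (G.comp (X ^ n)).roots = G.roots.bind (nthRoots n) := by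
  rcases eq_or_ne G 0 with rfl | hG
  · simp
  conv_lhs => rw [(IsAlgClosed.splits G).eq_prod_roots]
  have h0 : (0 : K[X]) ∉ G.roots.map fun u => X ^ n - C u := by
    rw [Multiset.mem_map]
    rintro ⟨u, -, hu⟩
    exact X_pow_sub_C_ne_zero hn u hu
  rw [mul_comp, C_comp, multiset_prod_comp, Multiset.map_map,
    roots_C_mul _ (leadingCoeff_ne_zero.2 hG)]
  simp only [Function.comp_def, sub_comp, X_comp, C_comp]
  rw [roots_multiset_prod _ h0, Multiset.bind_map]
  rfl

theorem nthRoots_two_sq (s : K) : nthRoots 2 (s ^ 2) = {s, -s} := by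
  have : (X : K[X]) ^ 2 - C (s ^ 2) = (X - C s) * (X - C (-s)) := by
    simp only [map_neg, map_pow]; ring
  rw [nthRoots, this, roots_mul ((monic_X_sub_C s).mul (monic_X_sub_C (-s))).ne_zero,
    roots_X_sub_C, roots_X_sub_C]
  rfl

theorem card_filter_nthRoots_two_sq (s : K) (p : K → Prop) [DecidablePred p]
    (hp : ∀ z, p (-z) ↔ p z) :
    ((nthRoots 2 (s ^ 2)).filter p).card = if p s then 2 else 0 := by
  by_cases h : p s <;> simp [nthRoots_two_sq, Multiset.filter_singleton, h, hp]

theorem card_filter_roots_comp_X_sq [IsAlgClosed K] {G : K[X]} (hG : G.eval 0 ≠ 0)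
    (p q : K → Prop) [DecidablePred p] [DecidablePred q] (hp : ∀ z, p (-z) ↔ p z)
    (hpq : ∀ s ≠ 0, p s ↔ q (s ^ 2)) :
    ((G.comp (X ^ 2)).roots.filter p).card = 2 * (G.roots.filter q).card := by
  rw [roots_comp_X_pow G two_pos, Multiset.filter_bind, Multiset.card_bind, mul_comm,
    ← smul_eq_mul, ← Multiset.sum_map_ite_eq_card_filter_nsmul]
  congr 1
  refine Multiset.map_congr rfl fun u hu => ?_
  obtain ⟨s, rfl⟩ := IsAlgClosed.exists_pow_nat_eq u two_pos
  have hs : s ≠ 0 := by rintro rfl; exact hG (by simpa using isRoot_of_mem_roots hu)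
  exact (card_filter_nthRoots_two_sq s p hp).trans (by simp only [hpq s hs])

theorem roots_eq_map_mobius [IsAlgClosed K] {F P : K[X]} (w : K) (hF1 : F.eval 1 ≠ 0)
    (hP : ∀ t ≠ w, P.eval t = (t - w) ^ F.natDegree * F.eval ((t + w) / (t - w))) :
    P.roots = F.roots.map fun z => w * (z + 1) / (z - 1) := by
  have hF0 : F ≠ 0 := by rintro rfl; simp at hF1
  have hroot_sub_one : ∀ z ∈ F.roots, z - 1 ≠ 0 := fun z hz h =>
    hF1 (sub_eq_zero.1 h ▸ isRoot_of_mem_roots hz)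
  set c := F.leadingCoeff * (F.roots.map (1 - ·)).prod
  have hc : c ≠ 0 := by
    refine mul_ne_zero (leadingCoeff_ne_zero.2 hF0) (Multiset.prod_ne_zero fun h => ?_)
    obtain ⟨z, hz, hz1⟩ := Multiset.mem_map.1 h
    exact hroot_sub_one z hz (by linear_combination -hz1)
  suffices hPc : P = C c * (F.roots.map fun z => X - C (w * (z + 1) / (z - 1))).prod by
    rw [hPc, roots_C_mul _ hc]
    simpa [Multiset.map_map, Function.comp_def] using
      roots_multiset_prod_X_sub_C (F.roots.map fun z => w * (z + 1) / (z - 1))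
  refine eq_of_infinite_eval_eq _ _ ((Set.finite_singleton w).infinite_compl.mono fun t ht => ?_)
  have ht : t - w ≠ 0 := sub_ne_zero.2 ht
  rw [Set.mem_ofPred_eq, hP t (sub_ne_zero.1 ht), (IsAlgClosed.splits F).eval_eq_prod_roots,
    ← IsAlgClosed.card_roots_eq_natDegree, ← Multiset.prod_replicate, ← Multiset.map_const',
    mul_left_comm, ← Multiset.prod_map_mul, eval_mul, eval_C, eval_multiset_prod,
    Multiset.map_map, mul_assoc, ← Multiset.prod_map_mul]
  congr 2
  refine Multiset.map_congr rfl fun z hz => ?_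
  have := hroot_sub_one z hz
  simp only [Function.comp_apply, eval_sub, eval_X, eval_C]
  field_simp
  ring

theorem filter_im_eq_zero_roots_map_ofReal (p : ℝ[X]) :
    (p.map (algebraMap ℝ ℂ)).roots.filter (fun z => z.im = 0)
      = p.roots.map ((↑) : ℝ → ℂ) := by
  ext z
  rw [Multiset.count_filter]
  split_ifs with hz
  · obtain ⟨x, rfl⟩ : ∃ x : ℝ, (x : ℂ) = z := ⟨z.re, Complex.ext rfl hz.symm⟩
    rw [Multiset.count_map_eq_count' _ _ Complex.ofReal_injective, count_roots, count_roots]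
    exact (eq_rootMultiplicity_map (algebraMap ℝ ℂ).injective x).symm
  · refine (Multiset.count_eq_zero.2 fun hmem => hz ?_).symm
    obtain ⟨x, -, rfl⟩ := Multiset.mem_map.1 hmem
    exact Complex.ofReal_im x

theorem card_filter_roots_map_ofReal (p : ℝ[X]) {Q : ℂ → Prop} {q : ℝ → Prop}
    [DecidablePred Q] [DecidablePred q] (hQ : ∀ z, Q z → z.im = 0) (hQq : ∀ x : ℝ, Q x ↔ q x) :
    ((p.map (algebraMap ℝ ℂ)).roots.filter Q).card = (p.roots.filter q).card := by
  have : (p.map (algebraMap ℝ ℂ)).roots.filter Q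
      = ((p.map (algebraMap ℝ ℂ)).roots.filter fun z => z.im = 0).filter Q := by
    rw [Multiset.filter_filter]
    exact Multiset.filter_congr fun z _ => ⟨fun h => ⟨h, hQ z h⟩, And.left⟩
  rw [this, filter_im_eq_zero_roots_map_ofReal, Multiset.filter_map, Multiset.card_map]
  exact congrArg _ (Multiset.filter_congr fun x _ => hQq x)

end Polynomial

namespace Complex

open ComplexOrder

theorem sq_pos_iff_im_eq_zero {s : ℂ} (hs : s ≠ 0) : 0 < s ^ 2 ↔ s.im = 0 := by
  have hs' : s.re ≠ 0 ∨ s.im ≠ 0 := by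
    by_contra! h; exact hs (Complex.ext h.1 h.2)
  rw [pos_iff, sq, mul_re, mul_im]
  constructor
  · rintro ⟨hre, him⟩
    rcases mul_eq_zero.1 (show s.re * s.im = 0 by linarith) with h | h
    · nlinarith [mul_self_pos.2 (hs'.resolve_left (not_not.2 h))]
    · exact h
  · intro h
    simp only [h, mul_zero, zero_mul, sub_zero, add_zero, and_true]
    exact mul_self_pos.2 (hs'.resolve_right (not_not.2 h))

theorem sq_neg_iff_re_eq_zero {s : ℂ} (hs : s ≠ 0) : s ^ 2 < 0 ↔ s.re = 0 := by
  have : (I * s) ^ 2 = -s ^ 2 := by rw [mul_pow, I_sq]; ring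
  rw [← Left.neg_pos_iff, ← this, sq_pos_iff_im_eq_zero (mul_ne_zero I_ne_zero hs)]
  simp

theorem mobius_im_eq_zero_iff {z : ℂ} (hz : z ≠ 1) :
    (I * (z + 1) / (z - 1)).im = 0 ↔ ‖z‖ = 1 := by
  have hN : normSq (z - 1) ≠ 0 := normSq_eq_zero.not.2 (sub_ne_zero.2 hz)
  have hnum :
      (I * (z + 1)).im * (z - 1).re - (I * (z + 1)).re * (z - 1).im = normSq z - 1 := by
    simp only [mul_re, mul_im, add_re, add_im, sub_re, sub_im, I_re, I_im, one_re, one_im,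
      normSq_apply]
    ring
  rw [div_im, ← sub_div, div_eq_zero_iff, or_iff_left hN, hnum, sub_eq_zero, normSq_eq_norm_sq,
    pow_eq_one_iff_of_nonneg (norm_nonneg z) two_ne_zero]

theorem mobius_re_eq_zero_iff {z : ℂ} (hz : z ≠ 1) :
    (I * (z + 1) / (z - 1)).re = 0 ↔ z.im = 0 := by
  have hN : normSq (z - 1) ≠ 0 := normSq_eq_zero.not.2 (sub_ne_zero.2 hz)
  have hnum : (I * (z + 1)).re * (z - 1).re + (I * (z + 1)).im * (z - 1).im = 2 * z.im := by
    simp only [mul_re, mul_im, add_re, add_im, sub_re, sub_im, I_re, I_im, one_re, one_im]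
    ring
  rw [div_re, ← add_div, div_eq_zero_iff, or_iff_left hN, hnum, mul_eq_zero,
    or_iff_right two_ne_zero]

theorem card_filter_roots_of_mobius {F P : ℂ[X]} (hF1 : F.eval 1 ≠ 0)
    (hP : ∀ t ≠ I, P.eval t = (t - I) ^ F.natDegree * F.eval ((t + I) / (t - I))) :
    (P.roots.filter fun z => z.im = 0).card = (F.roots.filter fun z => ‖z‖ = 1).card ∧
      (P.roots.filter fun z => z.re = 0).card = (F.roots.filter fun z => z.im = 0).card := by
  have hne : ∀ z ∈ F.roots, z ≠ 1 := fun z hz h => hF1 (h ▸ isRoot_of_mem_roots hz)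
  rw [roots_eq_map_mobius I hF1 hP, Multiset.filter_map, Multiset.filter_map, Multiset.card_map,
    Multiset.card_map]
  exact ⟨congrArg _ (Multiset.filter_congr fun z hz => mobius_im_eq_zero_iff (hne z hz)),
    congrArg _ (Multiset.filter_congr fun z hz => mobius_re_eq_zero_iff (hne z hz))⟩

theorem card_filter_roots_comp_X_sq_map_ofReal {p : ℝ[X]} (hp : p.eval 0 ≠ 0) :
    ((((p.map (algebraMap ℝ ℂ)).comp (X ^ 2)).roots.filter fun z => z.im = 0).card
        = 2 * (p.roots.filter fun u => 0 < u).card) ∧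
      ((((p.map (algebraMap ℝ ℂ)).comp (X ^ 2)).roots.filter fun z => z.re = 0).card
        = 2 * (p.roots.filter fun u => u < 0).card) := by
  classical
  have hp' : (p.map (algebraMap ℝ ℂ)).eval 0 ≠ 0 := by
    rwa [eval_zero_map, _root_.map_ne_zero]
  rw [card_filter_roots_comp_X_sq hp' _ (0 < ·) (by simp)
      fun s hs => (sq_pos_iff_im_eq_zero hs).symm,
    card_filter_roots_comp_X_sq hp' _ (· < 0) (by simp)
      fun s hs => (sq_neg_iff_re_eq_zero hs).symm,
    card_filter_roots_map_ofReal p (fun z hz => (pos_iff.1 hz).2.symm) fun x => zero_lt_real,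
    card_filter_roots_map_ofReal p (fun z hz => (neg_iff.1 hz).2) fun x => by norm_cast]
  exact ⟨rfl, rfl⟩

end Complex

theorem stmt_12_general (f g : Polynomial ℤ) (n : ℕ) (hdeg : f.natDegree = n)
    (h1 : f.eval 1 ≠ 0) (hm1 : f.eval (-1) ≠ 0)
    (hg : ∀ t : ℂ, t ≠ Complex.I →
      Polynomial.aeval (t ^ 2) g
        = (t - Complex.I) ^ n * Polynomial.aeval ((t + Complex.I) / (t - Complex.I)) f) :
    (∀ k : ℕ,
      ((f.map (Int.castRingHom ℂ)).roots.filter fun z => ‖z‖ = 1).card = 2 * k ↔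
      ((g.map (Int.castRingHom ℝ)).roots.filter fun u => 0 < u).card = k) ∧
    (∀ l : ℕ,
      (f.map (Int.castRingHom ℝ)).roots.card = 2 * l ↔
      ((g.map (Int.castRingHom ℝ)).roots.filter fun u => u < 0).card = l) := by
  set F := f.map (Int.castRingHom ℂ)
  set gℝ := g.map (Int.castRingHom ℝ)
  have hℝℂ : (algebraMap ℝ ℂ).comp (Int.castRingHom ℝ) = Int.castRingHom ℂ :=
    Subsingleton.elim _ _
  have hH (t : ℂ) (ht : t ≠ Complex.I) : ((gℝ.map (algebraMap ℝ ℂ)).comp (X ^ 2)).eval t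
      = (t - Complex.I) ^ F.natDegree * F.eval ((t + Complex.I) / (t - Complex.I)) := by
    simpa [F, gℝ, map_map, hℝℂ, eval_comp, aeval_def, eval₂_eq_eval_map, hdeg,
      natDegree_map_eq_of_injective (RingHom.injective_int (Int.castRingHom ℂ))] using hg t ht
  have hF1 : F.eval 1 ≠ 0 := by simpa [F, eval_one_map] using h1
  have hFm1 : F.eval (-1) ≠ 0 := by
    rw [show (-1 : ℂ) = ((-1 : ℤ) : ℂ) by simp, eval_intCast_map]; simpa using hm1
  have hg0 : gℝ.eval 0 ≠ 0 := by
    intro h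
    have h0 := hH 0 Complex.I_ne_zero.symm
    rw [zero_add, zero_sub, div_neg, div_self Complex.I_ne_zero, eval_comp, eval_pow, eval_X,
      zero_pow two_ne_zero, eval_zero_map, h, map_zero] at h0
    exact mul_ne_zero (pow_ne_zero _ (neg_ne_zero.2 Complex.I_ne_zero)) hFm1 h0.symm
  obtain ⟨hcircle, hreal⟩ := Complex.card_filter_roots_of_mobius hF1 hH
  obtain ⟨hpos, hneg⟩ := Complex.card_filter_roots_comp_X_sq_map_ofReal hg0
  have hfℝ : (f.map (Int.castRingHom ℝ)).roots.card
      = (F.roots.filter fun z => z.im = 0).card := by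
    have hFℝ : (f.map (Int.castRingHom ℝ)).map (algebraMap ℝ ℂ) = F := by rw [map_map, hℝℂ]
    rw [← hFℝ, filter_im_eq_zero_roots_map_ofReal, Multiset.card_map]
  exact ⟨fun k => by omega, fun l => by omega⟩

/-- root-counting correspondence between a palindromic `f` and the
polynomial `g` in `u = t²` defined by `g(t²) = (t-i)^n f((t+i)/(t-i))`. -/
theorem stmt_12 (f g : Polynomial ℤ) (n : ℕ) (hdeg : f.natDegree = n)
    (hn : 2 ≤ n) (heven : Even n) (hpal : f.reverse = f)
    (h1 : f.eval 1 ≠ 0) (hm1 : f.eval (-1) ≠ 0)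
    (hg : ∀ t : ℂ, t ≠ Complex.I →
      Polynomial.aeval (t ^ 2) g
        = (t - Complex.I) ^ n * Polynomial.aeval ((t + Complex.I) / (t - Complex.I)) f) :
    (∀ k : ℕ,
      ((f.map (Int.castRingHom ℂ)).roots.filter fun z => ‖z‖ = 1).card = 2 * k ↔
      ((g.map (Int.castRingHom ℝ)).roots.filter fun u => 0 < u).card = k) ∧
    (∀ l : ℕ,
      (f.map (Int.castRingHom ℝ)).roots.card = 2 * l ↔
      ((g.map (Int.castRingHom ℝ)).roots.filter fun u => u < 0).card = l) :=
  stmt_12_general f g n hdeg h1 hm1 hg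
end

section
/- For all nonnegative integers ℓ, m, n with ℓ + m ≤ n, the polynomial Q_{ℓ,m,n}(t) (as defined) satisfies Q_{ℓ,m,n}(0) = 1 > 0, Q_{ℓ,m,n}(1/2) < 0, and Q_{ℓ,m,n}(1) = 32 + 32n > 0; consequently Q_{ℓ,m,n} has a real root in the open interval (0, 1/2) and a real root in (1/2, 1). -/
/-! Evaluating at `1/2` gives `-(29512 ℓ + 58156 m + 372712 n + 367287) / 2 ^ 18`, which is
negative whenever `ℓ, m, n ≥ 0`; since `Q` is positive at `0` and at `1`, the intermediate value
theorem gives a root on each side of `1/2`. -/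

open Polynomial

/-- The denominator polynomial `Q_{ℓ,m,n}(t)` of the growth function. -/
noncomputable def Q (l m n : ℤ) : Polynomial ℤ :=
  X ^ 18 - C (4 * n + 6) * X ^ 17 + C (2 * n - m + 3) * X ^ 16
    - C (3 * n - m + l + 5) * X ^ 15 + C (5 * n - 3 * m + 5) * X ^ 14
    - C (n - 4 * m + 1) * X ^ 13 + C (8 * n - 4 * m + l + 9) * X ^ 12
    + C (5 * m - l) * X ^ 11 + C (10 * n - 5 * m + l + 11) * X ^ 10
    - C (2 * n - 6 * m + 2) * X ^ 9 + C (10 * n - 5 * m + l + 11) * X ^ 8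
    + C (5 * m - l) * X ^ 7 + C (8 * n - 4 * m + l + 9) * X ^ 6
    - C (n - 4 * m + 1) * X ^ 5 + C (5 * n - 3 * m + 5) * X ^ 4
    - C (3 * n - m + l + 5) * X ^ 3 + C (2 * n - m + 3) * X ^ 2
    - C (4 * n + 6) * X + 1

section SignChange

variable {R : Type*} [CommSemiring R] [Algebra R ℝ] {p : R[X]} {a b : ℝ}

theorem Polynomial.exists_mem_Ioo_aeval_eq_zero_of_neg_of_pos (hab : a ≤ b)
    (ha : aeval a p < 0) (hb : 0 < aeval b p) : ∃ x ∈ Set.Ioo a b, aeval x p = 0 :=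
  intermediate_value_Ioo hab p.continuous_aeval.continuousOn ⟨ha, hb⟩

theorem Polynomial.exists_mem_Ioo_aeval_eq_zero_of_pos_of_neg (hab : a ≤ b)
    (ha : 0 < aeval a p) (hb : aeval b p < 0) : ∃ x ∈ Set.Ioo a b, aeval x p = 0 :=
  intermediate_value_Ioo' hab p.continuous_aeval.continuousOn ⟨hb, ha⟩

end SignChange

theorem Q_eval_zero (l m n : ℤ) : (Q l m n).eval 0 = 1 := by
  simp [Q]

theorem Q_eval_one (l m n : ℤ) : (Q l m n).eval 1 = 32 + 32 * n := by
  simp [Q]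
  ring

theorem Q_aeval_zero (l m n : ℤ) : aeval (0 : ℝ) (Q l m n) = 1 := by
  simpa [Q_eval_zero] using aeval_algebraMap_apply ℝ (0 : ℤ) (Q l m n)

theorem Q_aeval_one (l m n : ℤ) : aeval (1 : ℝ) (Q l m n) = 32 + 32 * n := by
  simpa [Q_eval_one] using aeval_algebraMap_apply ℝ (1 : ℤ) (Q l m n)

theorem Q_aeval_half (l m n : ℤ) :
    aeval ((1 : ℝ) / 2) (Q l m n) = -(29512 * l + 58156 * m + 372712 * n + 367287) / 262144 := by
  simp only [Q, map_add, map_sub, map_mul, map_pow, map_one, map_ofNat, map_intCast, aeval_X,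
    eq_intCast]
  ring

theorem Q_aeval_half_neg {l m n : ℤ} (hl : 0 ≤ l) (hm : 0 ≤ m) (hn : 0 ≤ n) :
    aeval ((1 : ℝ) / 2) (Q l m n) < 0 := by
  have hpos : (0 : ℤ) < 29512 * l + 58156 * m + 372712 * n + 367287 := by omega
  rw [Q_aeval_half, neg_div, neg_lt_zero]
  exact div_pos (by exact_mod_cast hpos) (by norm_num)

theorem stmt_15_general (l m n : ℕ) :
    (Q (l : ℤ) (m : ℤ) (n : ℤ)).eval 0 = 1 ∧
    Polynomial.aeval ((1 : ℝ) / 2) (Q (l : ℤ) (m : ℤ) (n : ℤ)) < 0 ∧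
    (Q (l : ℤ) (m : ℤ) (n : ℤ)).eval 1 = 32 + 32 * n ∧
    (∃ x ∈ Set.Ioo (0 : ℝ) (1 / 2), Polynomial.aeval x (Q (l : ℤ) (m : ℤ) (n : ℤ)) = 0) ∧
    (∃ y ∈ Set.Ioo ((1 : ℝ) / 2) 1, Polynomial.aeval y (Q (l : ℤ) (m : ℤ) (n : ℤ)) = 0) := by
  have hhalf :=
    Q_aeval_half_neg (Int.natCast_nonneg l) (Int.natCast_nonneg m) (Int.natCast_nonneg n)
  refine ⟨Q_eval_zero _ _ _, hhalf, Q_eval_one _ _ _, ?_, ?_⟩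
  · refine exists_mem_Ioo_aeval_eq_zero_of_pos_of_neg (by norm_num) ?_ hhalf
    rw [Q_aeval_zero]
    exact one_pos
  · refine exists_mem_Ioo_aeval_eq_zero_of_neg_of_pos (by norm_num) hhalf ?_
    rw [Q_aeval_one]
    positivity

theorem stmt_15 (l m n : ℕ) (h : l + m ≤ n) :
    (Q (l : ℤ) (m : ℤ) (n : ℤ)).eval 0 = 1 ∧
    Polynomial.aeval ((1 : ℝ) / 2) (Q (l : ℤ) (m : ℤ) (n : ℤ)) < 0 ∧
    (Q (l : ℤ) (m : ℤ) (n : ℤ)).eval 1 = 32 + 32 * n ∧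
    (∃ x ∈ Set.Ioo (0 : ℝ) (1 / 2), Polynomial.aeval x (Q (l : ℤ) (m : ℤ) (n : ℤ)) = 0) ∧
    (∃ y ∈ Set.Ioo ((1 : ℝ) / 2) 1, Polynomial.aeval y (Q (l : ℤ) (m : ℤ) (n : ℤ)) = 0) :=
  stmt_15_general l m n
end

section
/- For all nonnegative integers ℓ, m, n with ℓ + m ≤ n, the polynomial Q_{ℓ,m,n} satisfies Q_{ℓ,m,n}(1/(4n+5)) < 0 and Q_{ℓ,m,n}(1/(4n+m+ℓ+6)) > 0; hence its smallest positive real root lies strictly between 1/(4n+m+ℓ+6) and 1/(4n+5). In particular, the growth rate τ_{ℓ,m,n} = 1/R (where R is the smallest positive root) satisfies 4n+5 < τ_{ℓ,m,n} < 4n+m+ℓ+6, and τ_{ℓ,m,n} → ∞ as n → ∞. -/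
/-!
Write `Q(t) = 1 - (4n+6)t + (2n-m+3)t² - (3n-m+ℓ+5)t³ + t⁴ T(t)`. Every coefficient of `T` is
at most `11(n+1)` in absolute value, so `|T(t)| ≤ 11(n+1)/(1-t)` for `0 ≤ t < 1`. At
`t = 1/(4n+5)` the constant and linear terms add up to `-t`, which outweighs everything else,
so `Q < 0` there. For `0 < t ≤ 1/(4n+m+ℓ+6)` those two terms are nonnegative and the quadratic
term outweighs the cubic term and the tail, so `Q > 0`. By the intermediate value theorem the
least positive root lies strictly between these two points.
-/

open Polynomial

theorem abs_sum_mul_pow_le_div {N : ℕ} {c : Fin N → ℝ} {K x : ℝ} (hc : ∀ j, |c j| ≤ K)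
    (hK : 0 ≤ K) (hx₀ : 0 ≤ x) (hx₁ : x < 1) :
    |∑ j, c j * x ^ (j : ℕ)| ≤ K / (1 - x) :=
  calc |∑ j, c j * x ^ (j : ℕ)|
      ≤ ∑ j : Fin N, K * x ^ (j : ℕ) := by
        refine (Finset.abs_sum_le_sum_abs _ _).trans (Finset.sum_le_sum fun j _ => ?_)
        rw [abs_mul, abs_of_nonneg (pow_nonneg hx₀ _)]
        exact mul_le_mul_of_nonneg_right (hc j) (pow_nonneg hx₀ _)
    _ = K * ∑ j ∈ Finset.range N, x ^ j := by
        rw [← Finset.mul_sum, Fin.sum_univ_eq_sum_range (fun j => x ^ j)]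
    _ ≤ K * (x ^ 0 / (1 - x)) :=
        mul_le_mul_of_nonneg_left (Finset.range_eq_Ico N ▸ geom_sum_Ico_le_of_lt_one hx₀ hx₁) hK
    _ = K / (1 - x) := by rw [pow_zero, mul_one_div]

noncomputable def tailCoeff (l m n : ℝ) : Fin 15 → ℝ :=
  ![5 * n - 3 * m + 5, -(n - 4 * m + 1), 8 * n - 4 * m + l + 9, 5 * m - l,
    10 * n - 5 * m + l + 11, -(2 * n - 6 * m + 2), 10 * n - 5 * m + l + 11, 5 * m - l,
    8 * n - 4 * m + l + 9, -(n - 4 * m + 1), 5 * n - 3 * m + 5, -(3 * n - m + l + 5),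
    2 * n - m + 3, -(4 * n + 6), 1]

theorem aeval_Q_eq (l m n : ℤ) (x : ℝ) :
    aeval x (Q l m n) = 1 - (4 * n + 6) * x + (2 * n - m + 3) * x ^ 2
      - (3 * n - m + l + 5) * x ^ 3 + x ^ 4 * ∑ j, tailCoeff l m n j * x ^ (j : ℕ) := by
  simp only [Q, eq_intCast, Int.cast_mul, Int.cast_ofNat, Int.cast_sub,
    map_add, aeval_sub, map_pow, aeval_X, map_mul, map_ofNat, map_intCast, map_one, tailCoeff,
    Fin.sum_univ_succ, Fin.isValue, Matrix.cons_val_zero, Fin.coe_ofNat_eq_mod, Nat.zero_mod,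
    pow_zero, mul_one, Matrix.cons_val_succ, Fin.val_succ, zero_add, pow_one, Nat.reduceAdd,
    Finset.univ_unique, Fin.default_eq_zero, Matrix.cons_val_fin_one, Fin.val_eq_zero, one_mul,
    Finset.sum_const, Finset.card_singleton, one_smul]
  ring

theorem abs_tailCoeff_le {l m n : ℝ} (hl : 0 ≤ l) (hm : 0 ≤ m) (hlmn : l + m ≤ n)
    (j : Fin 15) : |tailCoeff l m n j| ≤ 11 * (n + 1) := by
  fin_cases j <;>
    simp only [tailCoeff, Fin.reduceFinMk, Fin.zero_eta, Fin.mk_one, Fin.isValue, Matrix.cons_val,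
      Matrix.cons_val_zero, Matrix.cons_val_one] <;>
    rw [abs_le] <;> constructor <;> linarith

theorem aeval_Q_neg (l m n : ℕ) (hlmn : l + m ≤ n) :
    aeval ((1 : ℝ) / (4 * n + 5)) (Q l m n) < 0 := by
  have hx₀ : (0 : ℝ) < 1 / (4 * n + 5) := by positivity
  have hxn : (1 : ℝ) / (4 * n + 5) * (4 * n + 5) = 1 := by field_simp
  generalize (1 : ℝ) / (4 * n + 5) = x at hx₀ hxn ⊢
  set T := ∑ j, tailCoeff l m n j * x ^ (j : ℕ)
  have hlmn' : (l : ℝ) + m ≤ n := by exact_mod_cast hlmn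
  have hx₅ : x ≤ 1 / 5 := by nlinarith [mul_nonneg hx₀.le (Nat.cast_nonneg (α := ℝ) n)]
  have hT : |T| ≤ 55 / 4 * (n + 1) :=
    (abs_sum_mul_pow_le_div (abs_tailCoeff_le (by positivity) (by positivity) hlmn')
      (by positivity) hx₀.le (by linarith)).trans (by rw [div_le_iff₀ (by linarith)]; nlinarith)
  have hhead : 1 - (4 * n + 6) * x + (2 * n - m + 3) * x ^ 2 = -(2 * n + 2 + m) * x ^ 2 := by
    linear_combination (x - 1) * hxn
  have htail : x ^ 4 * T ≤ 11 / 20 * (n + 1) * x ^ 2 := by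
    have hx2 : x ^ 2 ≤ 1 / 25 := by nlinarith
    calc x ^ 4 * T ≤ x ^ 4 * (55 / 4 * (n + 1)) :=
          mul_le_mul_of_nonneg_left (le_of_abs_le hT) (by positivity)
      _ = x ^ 2 * (55 / 4 * (n + 1)) * x ^ 2 := by ring
      _ ≤ x ^ 2 * (55 / 4 * (n + 1)) * (1 / 25) := by gcongr
      _ = 11 / 20 * (n + 1) * x ^ 2 := by ring
  have hcubic : 0 < (3 * n - m + l + 5) * x ^ 3 := mul_pos (by linarith) (by positivity)
  rw [aeval_Q_eq]
  push_cast
  nlinarith [sq_pos_of_pos hx₀]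

theorem aeval_Q_pos (l m n : ℕ) (hlmn : l + m ≤ n) {x : ℝ} (hx₀ : 0 < x)
    (hx : x * (4 * n + m + l + 6) ≤ 1) : 0 < aeval x (Q l m n) := by
  set T := ∑ j, tailCoeff l m n j * x ^ (j : ℕ)
  have hlmn' : (l : ℝ) + m ≤ n := by exact_mod_cast hlmn
  have hxn : x * (4 * n + 6) ≤ 1 := by
    nlinarith [mul_nonneg hx₀.le (Nat.cast_nonneg (α := ℝ) (m + l))]
  have hx₆ : x ≤ 1 / 6 := by nlinarith [mul_nonneg hx₀.le (Nat.cast_nonneg (α := ℝ) n)]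
  have hT : |T| ≤ 66 / 5 * (n + 1) :=
    (abs_sum_mul_pow_le_div (abs_tailCoeff_le (by positivity) (by positivity) hlmn')
      (by positivity) hx₀.le (by linarith)).trans (by rw [div_le_iff₀ (by linarith)]; nlinarith)
  have hlinear : 0 ≤ 1 - (4 * n + 6) * x := by linarith
  have hcubic : (3 * n - m + l + 5) * x ≤ 1 := by nlinarith
  have hquartic : 66 / 5 * (n + 1) * x ^ 2 ≤ 11 / 20 := by nlinarith
  have hquad : 0 < (2 * n - m + 3) - (3 * n - m + l + 5) * x - 66 / 5 * (n + 1) * x ^ 2 := by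
    linarith
  have htail : -(66 / 5 * (n + 1)) * x ^ 4 ≤ x ^ 4 * T := by
    nlinarith [neg_abs_le T, pow_pos hx₀ 4]
  rw [aeval_Q_eq]
  push_cast
  nlinarith [mul_pos (pow_pos hx₀ 2) hquad]

theorem mem_Ioo_of_isLeast_pos_root {f : ℝ → ℝ} (hf : Continuous f) {a b R : ℝ} (ha : 0 < a)
    (hab : a < b) (hpos : ∀ x, 0 < x → x ≤ a → 0 < f x) (hb : f b < 0) (hR₀ : 0 < R)
    (hR : f R = 0) (hmin : ∀ x, 0 < x → f x = 0 → R ≤ x) : a < R ∧ R < b := by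
  obtain ⟨r, hr, hr₀⟩ := intermediate_value_Ioo' hab.le hf.continuousOn
    ⟨hb, hpos a ha le_rfl⟩
  refine ⟨lt_of_not_ge fun hRa => (hpos R hR₀ hRa).ne' hR, ?_⟩
  exact (hmin r (ha.trans hr.1) hr₀).trans_lt hr.2

theorem least_pos_root_Q_bounds (l m n : ℕ) (hlmn : l + m ≤ n) {R : ℝ} (hR₀ : 0 < R)
    (hR : aeval R (Q l m n) = 0) (hmin : ∀ x : ℝ, 0 < x → aeval x (Q l m n) = 0 → R ≤ x) :
    (1 : ℝ) / (4 * n + m + l + 6) < R ∧ R < 1 / (4 * n + 5) ∧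
      (4 * n + 5 : ℝ) < 1 / R ∧ 1 / R < 4 * n + m + l + 6 := by
  have hD : (0 : ℝ) < 4 * n + m + l + 6 := by positivity
  obtain ⟨hlo, hhi⟩ := mem_Ioo_of_isLeast_pos_root (Q l m n).continuous_aeval (by positivity)
    (one_div_lt_one_div_of_lt (by positivity) (by linarith [(m + l).cast_nonneg (α := ℝ)]))
    (fun x hx₀ hx => aeval_Q_pos l m n hlmn hx₀ ((le_div_iff₀ hD).1 hx))
    (aeval_Q_neg l m n hlmn) hR₀ hR hmin
  exact ⟨hlo, hhi, (lt_one_div (by positivity) hR₀).2 hhi, (one_div_lt hD hR₀).1 hlo⟩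

theorem stmt_16 :
    (∀ l m n : ℕ, l + m ≤ n →
      Polynomial.aeval ((1 : ℝ) / (4 * n + 5)) (Q (l : ℤ) (m : ℤ) (n : ℤ)) < 0 ∧
      0 < Polynomial.aeval ((1 : ℝ) / (4 * n + m + l + 6)) (Q (l : ℤ) (m : ℤ) (n : ℤ)) ∧
      ∀ R : ℝ, (0 < R ∧ Polynomial.aeval R (Q (l : ℤ) (m : ℤ) (n : ℤ)) = 0 ∧
          ∀ x : ℝ, 0 < x → Polynomial.aeval x (Q (l : ℤ) (m : ℤ) (n : ℤ)) = 0 → R ≤ x) →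
        (1 : ℝ) / (4 * n + m + l + 6) < R ∧ R < 1 / (4 * n + 5) ∧
          (4 * n + 5 : ℝ) < 1 / R ∧ 1 / R < 4 * n + m + l + 6) ∧
    (∀ (l m : ℕ → ℕ) (τ : ℕ → ℝ), (∀ n, l n + m n ≤ n) →
      (∀ n, ∃ R : ℝ, 0 < R ∧
          Polynomial.aeval R (Q (l n : ℤ) (m n : ℤ) (n : ℤ)) = 0 ∧
          (∀ x : ℝ, 0 < x → Polynomial.aeval x (Q (l n : ℤ) (m n : ℤ) (n : ℤ)) = 0 → R ≤ x) ∧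
          τ n = 1 / R) →
      Filter.Tendsto τ Filter.atTop Filter.atTop) := by
  refine ⟨fun l m n hlmn => ⟨aeval_Q_neg l m n hlmn, aeval_Q_pos l m n hlmn (by positivity)
    (by rw [one_div_mul_cancel (by positivity)]), fun R ⟨hR₀, hR, hmin⟩ =>
      least_pos_root_Q_bounds l m n hlmn hR₀ hR hmin⟩, fun l m τ hlm hτ => ?_⟩
  have hτ_ge : ∀ n : ℕ, 4 * (n : ℝ) + 5 ≤ τ n := fun n => by
    obtain ⟨R, hR₀, hR, hmin, hτn⟩ := hτ n
    exact hτn ▸ (least_pos_root_Q_bounds (l n) (m n) n (hlm n) hR₀ hR hmin).2.2.1.le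
  refine Filter.tendsto_atTop_mono hτ_ge ?_
  exact Filter.tendsto_atTop_add_const_right _ 5
    (tendsto_natCast_atTop_atTop.const_mul_atTop (by norm_num))
end

section
/- For all nonnegative integers ℓ, m, n satisfying ℓ + m ≤ n and n - ℓ - m ≤ (n+1)/2, the polynomial Q_{ℓ,m,n}(t) has no factorization of the form Q_{ℓ,m,n}(t) = (1 + a·t + t²)·(1 + Σ_{k=1}^{8} b_k t^k + Σ_{k=1}^{7} b_{8-k} t^{k+8} + t^{16}) with a, b₁, ..., b₈ ∈ ℤ. In other words, Q_{ℓ,m,n} has no monic palindromic quadratic factor with constant term 1 over ℤ. -/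
/-!
Comparing the coefficients of degrees 1, …, 9 of a factorization
`Q = (1 + a t + t²) · P` with `P` palindromic determines `b₁, …, b₈` recursively from `a`, and the
central coefficient then forces `f(a) = 0` for a degree-9 polynomial
`f = f₀ + n f_n + m f_m + ℓ f_ℓ`. Its integer roots are ruled out by sign analysis: `f > 0` for
`a ≤ -(4n+6)`, `f < 0` for `-(4n+5) ≤ a ≤ -3` and for `a ≥ 2`, and the four values `a = -2, …, 1`
are checked directly. On each infinite range, writing `a = c ∓ s` with `s ≥ 0` turns every
one-variable polynomial involved into one whose coefficients in `s` all have the same sign.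
-/

open Polynomial

section QuadraticFactor

variable {R : Type*} [Semiring R] (a : R) (p : R[X])

theorem coeff_one_add_C_mul_X_add_X_sq_mul_one :
    ((1 + C a * X + X ^ 2) * p).coeff 1 = p.coeff 1 + a * p.coeff 0 := by
  simp [add_mul, mul_assoc, coeff_C_mul, coeff_X_pow_mul', coeff_X_mul]

theorem coeff_one_add_C_mul_X_add_X_sq_mul_add_two (k : ℕ) :
    ((1 + C a * X + X ^ 2) * p).coeff (k + 2) =
      p.coeff (k + 2) + a * p.coeff (k + 1) + p.coeff k := by
  simp [add_mul, mul_assoc, coeff_C_mul, coeff_X_pow_mul', coeff_X_mul]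

end QuadraticFactor

section PalindromicOctic

noncomputable def palindromicOctic (b : ℕ → ℤ) : ℤ[X] :=
  1 + (∑ k ∈ Finset.Icc 1 8, C (b k) * X ^ k)
    + (∑ k ∈ Finset.Icc 1 7, C (b (8 - k)) * X ^ (k + 8)) + X ^ 16

variable (b : ℕ → ℤ)

theorem coeff_palindromicOctic_zero : (palindromicOctic b).coeff 0 = 1 := by
  simp [palindromicOctic, coeff_X_pow, coeff_one]

theorem coeff_palindromicOctic {j : ℕ} (hj₁ : 1 ≤ j) (hj₈ : j ≤ 8) :
    (palindromicOctic b).coeff j = b j := by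
  have hsum : ∑ k ∈ Finset.Icc 1 7, (if j = k + 8 then b (8 - k) else 0) = 0 :=
    Finset.sum_eq_zero fun k hk => if_neg (by simp only [Finset.mem_Icc] at hk; omega)
  simp [palindromicOctic, coeff_X_pow, coeff_one, hsum, hj₁, hj₈, show j ≠ 0 by omega,
    show j ≠ 16 by omega]

theorem coeff_palindromicOctic_nine : (palindromicOctic b).coeff 9 = b 7 := by
  simp [palindromicOctic, coeff_X_pow, coeff_one]

end PalindromicOctic

section Elim

def elimConst (a : ℤ) : ℤ :=
  -a^9 - 6*a^8 + 6*a^7 + 43*a^6 - 11*a^5 - 91*a^4 + 4*a^3 + 55*a^2 + 3*a - 6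

def elimN (a : ℤ) : ℤ := -4*a^8 - 2*a^7 + 29*a^6 + 9*a^5 - 63*a^4 - 11*a^3 + 41*a^2 + 3*a - 6

def elimM (a : ℤ) : ℤ := a^7 + a^6 - 4*a^5 - 2*a^4 + 3*a^3 - 2*a^2 + a + 2

def elimL (a : ℤ) : ℤ := -a^6 + 6*a^4 - a^3 - 10*a^2 + 2*a + 4

/-- The paper's `f_{ℓ,m,n}(a)`. -/
def elim (l m n a : ℤ) : ℤ := elimConst a + n * elimN a + m * elimM a + l * elimL a

theorem elim_eq_zero_of_Q_eq_mul {l m n a : ℤ} {b : ℕ → ℤ}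
    (h : Q l m n = (1 + C a * X + X ^ 2) * palindromicOctic b) : elim l m n a = 0 := by
  have e1 : (Q l m n).coeff 1 =
      (palindromicOctic b).coeff 1 + a * (palindromicOctic b).coeff 0 := by
    rw [h, coeff_one_add_C_mul_X_add_X_sq_mul_one]
  have e : ∀ j, (Q l m n).coeff (j + 2) = (palindromicOctic b).coeff (j + 2)
      + a * (palindromicOctic b).coeff (j + 1) + (palindromicOctic b).coeff j := fun j => by
    rw [h, coeff_one_add_C_mul_X_add_X_sq_mul_add_two]
  have e2 := e 0
  have e3 := e 1
  have e4 := e 2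
  have e5 := e 3
  have e6 := e 4
  have e7 := e 5
  have e8 := e 6
  have e9 := e 7
  simp only [Q, coeff_add, coeff_sub, coeff_C_mul_X_pow, coeff_C_mul_X, coeff_X_pow, coeff_one]
    at e1 e2 e3 e4 e5 e6 e7 e8 e9
  norm_num [coeff_palindromicOctic, coeff_palindromicOctic_zero, coeff_palindromicOctic_nine]
    at e1 e2 e3 e4 e5 e6 e7 e8 e9
  unfold elim elimConst elimN elimM elimL
  -- For `k ≥ 1` the multiplier of the degree-`(9 - k)` equation is `(-1)^k · 2 T_k(a / 2)`
  -- (Chebyshev), which makes `b₁, …, b₈` cancel.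
  linear_combination (a^8 - 8*a^6 + 20*a^4 - 16*a^2 + 2) * e1
    + (-a^7 + 7*a^5 - 14*a^3 + 7*a) * e2 + (a^6 - 6*a^4 + 9*a^2 - 2) * e3
    + (-a^5 + 5*a^3 - 5*a) * e4 + (a^4 - 4*a^2 + 2) * e5 + (-a^3 + 3*a) * e6
    + (a^2 - 2) * e7 - a * e8 + e9

theorem elimN_nonpos_of_le_neg_three {a : ℤ} (ha : a ≤ -3) : elimN a ≤ 0 := by
  obtain ⟨s, rfl⟩ : ∃ s : ℕ, a = -3 - s := ⟨(-3 - a).toNat, by omega⟩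
  rw [← neg_nonneg, elimN]; ring_nf; positivity

theorem elimM_nonpos_of_le_neg_three {a : ℤ} (ha : a ≤ -3) : elimM a ≤ 0 := by
  obtain ⟨s, rfl⟩ : ∃ s : ℕ, a = -3 - s := ⟨(-3 - a).toNat, by omega⟩
  rw [← neg_nonneg, elimM]; ring_nf; positivity

theorem elimL_nonpos_of_le_neg_three {a : ℤ} (ha : a ≤ -3) : elimL a ≤ 0 := by
  obtain ⟨s, rfl⟩ : ∃ s : ℕ, a = -3 - s := ⟨(-3 - a).toNat, by omega⟩
  rw [← neg_nonneg, elimL]; ring_nf; positivity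

theorem four_mul_elimConst_sub_neg {a : ℤ} (ha : a ≤ -3) :
    4 * elimConst a - (a + 5) * elimN a < 0 := by
  obtain ⟨s, rfl⟩ : ∃ s : ℕ, a = -3 - s := ⟨(-3 - a).toNat, by omega⟩
  rw [← neg_pos, elimConst, elimN]; ring_nf; positivity

theorem four_mul_elimConst_sub_pos {a : ℤ} (ha : a ≤ -6) :
    0 < 4 * elimConst a - (a + 6) * (elimN a + elimM a + elimL a) := by
  obtain ⟨s, rfl⟩ : ∃ s : ℕ, a = -6 - s := ⟨(-6 - a).toNat, by omega⟩
  rw [elimConst, elimN, elimM, elimL]; ring_nf; positivity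

theorem elimConst_neg_of_two_le {a : ℤ} (ha : 2 ≤ a) : elimConst a < 0 := by
  obtain ⟨s, rfl⟩ : ∃ s : ℕ, a = 2 + s := ⟨(a - 2).toNat, by omega⟩
  rw [← neg_pos, elimConst]; ring_nf; positivity

theorem elimM_nonneg_of_two_le {a : ℤ} (ha : 2 ≤ a) : 0 ≤ elimM a := by
  obtain ⟨s, rfl⟩ : ∃ s : ℕ, a = 2 + s := ⟨(a - 2).toNat, by omega⟩
  rw [elimM]; ring_nf; positivity

theorem elimL_nonpos_of_two_le {a : ℤ} (ha : 2 ≤ a) : elimL a ≤ 0 := by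
  obtain ⟨s, rfl⟩ : ∃ s : ℕ, a = 2 + s := ⟨(a - 2).toNat, by omega⟩
  rw [← neg_nonneg, elimL]; ring_nf; positivity

theorem elimN_add_elimM_nonpos_of_two_le {a : ℤ} (ha : 2 ≤ a) : elimN a + elimM a ≤ 0 := by
  obtain ⟨s, rfl⟩ : ∃ s : ℕ, a = 2 + s := ⟨(a - 2).toNat, by omega⟩
  rw [← neg_nonneg, elimN, elimM]; ring_nf; positivity

theorem elim_pos_of_le {l m n a : ℤ} (hl : 0 ≤ l) (hln : l ≤ n) (hmn : m ≤ n)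
    (ha : a ≤ -(4 * n + 6)) : 0 < elim l m n a := by
  have ha₃ : a ≤ -3 := by omega
  have hM := elimM_nonpos_of_le_neg_three ha₃
  have hL := elimL_nonpos_of_le_neg_three ha₃
  have hNML : elimN a + elimM a + elimL a ≤ 0 := by
    linarith [elimN_nonpos_of_le_neg_three ha₃]
  have hsplit : 4 * elim l m n a =
      (4 * elimConst a - (a + 6) * (elimN a + elimM a + elimL a))
      + (4 * n + a + 6) * (elimN a + elimM a + elimL a)
      - 4 * (n - m) * elimM a - 4 * (n - l) * elimL a := by
    unfold elim; ring
  nlinarith [four_mul_elimConst_sub_pos (by omega : a ≤ -6),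
    mul_nonneg_of_nonpos_of_nonpos (by omega : 4 * n + a + 6 ≤ 0) hNML,
    mul_nonpos_of_nonneg_of_nonpos (by omega : 0 ≤ n - m) hM,
    mul_nonpos_of_nonneg_of_nonpos (by omega : 0 ≤ n - l) hL]

theorem elim_neg_of_le_of_le {l m n a : ℤ} (hl : 0 ≤ l) (hm : 0 ≤ m)
    (ha₁ : -(4 * n + 5) ≤ a) (ha₂ : a ≤ -3) : elim l m n a < 0 := by
  have hsplit : 4 * elim l m n a = (4 * elimConst a - (a + 5) * elimN a)
      + (4 * n + a + 5) * elimN a + 4 * m * elimM a + 4 * l * elimL a := by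
    unfold elim; ring
  nlinarith [four_mul_elimConst_sub_neg ha₂,
    mul_nonpos_of_nonneg_of_nonpos (by omega : 0 ≤ 4 * n + a + 5)
      (elimN_nonpos_of_le_neg_three ha₂),
    mul_nonpos_of_nonneg_of_nonpos hm (elimM_nonpos_of_le_neg_three ha₂),
    mul_nonpos_of_nonneg_of_nonpos hl (elimL_nonpos_of_le_neg_three ha₂)]

theorem elim_neg_of_two_le {l m n a : ℤ} (hl : 0 ≤ l) (hm : 0 ≤ m) (hmn : m ≤ n)
    (ha : 2 ≤ a) : elim l m n a < 0 := by
  have hsplit : elim l m n a =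
      elimConst a + n * (elimN a + elimM a) - (n - m) * elimM a + l * elimL a := by
    unfold elim; ring
  nlinarith [elimConst_neg_of_two_le ha,
    mul_nonpos_of_nonneg_of_nonpos (by omega : 0 ≤ n) (elimN_add_elimM_nonpos_of_two_le ha),
    mul_nonneg (by omega : 0 ≤ n - m) (elimM_nonneg_of_two_le ha),
    mul_nonpos_of_nonneg_of_nonpos hl (elimL_nonpos_of_two_le ha)]

theorem elim_ne_zero {l m n : ℤ} (hl : 0 ≤ l) (hm : 0 ≤ m) (hln : l ≤ n) (hmn : m ≤ n)
    (a : ℤ) : elim l m n a ≠ 0 := by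
  rcases (show a ≤ -(4 * n + 6) ∨ (-(4 * n + 5) ≤ a ∧ a ≤ -3) ∨ (-2 ≤ a ∧ a ≤ 1) ∨ 2 ≤ a
      by omega) with ha | ⟨ha₁, ha₂⟩ | ⟨ha₁, ha₂⟩ | ha
  · exact (elim_pos_of_le hl hln hmn ha).ne'
  · exact (elim_neg_of_le_of_le hl hm ha₁ ha₂).ne
  · interval_cases a <;> norm_num [elim, elimConst, elimN, elimM, elimL] <;> omega
  · exact (elim_neg_of_two_le hl hm hmn ha).ne

end Elim

theorem stmt_17_general (l m n : ℕ) (h1 : l + m ≤ n) :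
    ¬ ∃ (a : ℤ) (b : ℕ → ℤ),
      Q (l : ℤ) (m : ℤ) (n : ℤ)
        = (1 + C a * X + X ^ 2) *
          (1 + (∑ k ∈ Finset.Icc 1 8, C (b k) * X ^ k)
             + (∑ k ∈ Finset.Icc 1 7, C (b (8 - k)) * X ^ (k + 8)) + X ^ 16) := by
  rintro ⟨a, b, h⟩
  exact elim_ne_zero (Int.natCast_nonneg l) (Int.natCast_nonneg m) (by omega) (by omega) a
    (elim_eq_zero_of_Q_eq_mul (b := b) h)

theorem stmt_17 (l m n : ℕ) (h1 : l + m ≤ n) (h2 : n - l - m ≤ (n + 1) / 2) :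
    ¬ ∃ (a : ℤ) (b : ℕ → ℤ),
      Q (l : ℤ) (m : ℤ) (n : ℤ)
        = (1 + C a * X + X ^ 2) *
          (1 + (∑ k ∈ Finset.Icc 1 8, C (b k) * X ^ k)
             + (∑ k ∈ Finset.Icc 1 7, C (b (8 - k)) * X ^ (k + 8)) + X ^ 16) :=
  stmt_17_general l m n h1
end

section
/- For every nonnegative integer n with n ≡ 1 (mod 3), there are no integers a, b satisfying simultaneously f(a,b) = 0 and g(a,b) = 0, where f and g are the two polynomial consistency equations (in a, b, and n, with ℓ = 0, m = n) arising from assuming Q_{0,n,n}(t) = (1 + a t + b t² + a t³ + t⁴)·(monic palindromic degree-14 cofactor with integer coefficients). Consequently, Q_{0,n,n}(t) has no monic palindromic quartic factor with constant term 1 over ℤ when n ≡ 1 (mod 3). -/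
open Polynomial

/-- The first consistency equation `f_{ℓ,m,n}(a,b)` from the paper's proof. -/
def fcons (l m n a b : ℤ) : ℤ :=
  -1 - a ^ 8 - b ^ 4 - m + a ^ 7 * (-6 - 4 * n) + b ^ 2 * (1 + 2 * m - 3 * n)
    + a ^ 6 * (-8 + 7 * b + m - 2 * n) + b * (l + m - n) + n + b ^ 3 * (2 - m + 2 * n)
    + a ^ 4 * (-11 - 15 * b ^ 2 + 6 * m - 11 * n + b * (30 - 5 * m + 10 * n))
    + a * (15 + 2 * l + 2 * m + b * (-46 - 8 * m - 30 * n)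
        + b ^ 2 * (-15 - 3 * l + 3 * m - 9 * n) + 9 * n + b ^ 3 * (24 + 16 * n))
    + a ^ 2 * (2 + 10 * b ^ 3 - l + 3 * m + b ^ 2 * (-24 + 6 * m - 12 * n) - 5 * n
        + b * (9 - 12 * m + 21 * n))
    + a ^ 5 * (-29 - l + m - 19 * n + b * (36 + 24 * n))
    + a ^ 3 * (13 - 2 * l + 6 * m + b ^ 2 * (-60 - 40 * n) + 9 * n
        + b * (68 + 4 * l - 4 * m + 44 * n))

/-- The second consistency equation `g_{ℓ,m,n}(a,b)` from the paper's proof. -/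
def gcons (l m n a b : ℤ) : ℤ :=
  12 + a ^ 7 * (2 - b) + 2 * m + b ^ 2 * (-23 - 4 * m - 15 * n)
    + b ^ 3 * (-5 - l + m - 3 * n) + 8 * n + b ^ 4 * (6 + 4 * n)
    + a ^ 5 * (12 + 6 * b ^ 2 - 2 * m + b * (-18 + m - 2 * n) + 4 * n)
    + a ^ 6 * (12 + b * (-6 - 4 * n) + 8 * n)
    + b * (15 + 2 * l + 2 * m + 9 * n)
    + a ^ 3 * (6 - 10 * b ^ 3 - 8 * m + b * (-35 + 12 * m - 23 * n) + 14 * n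
        + b ^ 2 * (36 - 4 * m + 8 * n))
    + a * (4 * b ^ 4 + 2 * l + 2 * m + b * (4 - l + 7 * m - 11 * n)
        + b ^ 3 * (-14 + 3 * m - 6 * n) - 2 * n + b ^ 2 * (10 - 10 * m + 18 * n))
    + a ^ 4 * (34 + 2 * l - 2 * m + b * (-77 - l + m - 51 * n) + 22 * n
        + b ^ 2 * (30 + 20 * n))
    + a ^ 2 * (-46 - 8 * m + b ^ 3 * (-36 - 24 * n) + b * (-7 - 6 * l + 10 * m - 3 * n)
        - 30 * n + b ^ 2 * (87 + 3 * l - 3 * m + 57 * n))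

/-!
Comparing the coefficients of `X ^ 17, …, X ^ 11` in a factorization
`Q = (1 + a X + b X² + a X³ + X⁴) · R` determines the seven free coefficients of the palindromic
cofactor `R` one after another; substituting them into the coefficients of `X ^ 10` and `X ^ 9`
leaves exactly `f(a, b) = 0` and `g(a, b) = 0`. Both are polynomials with integer coefficients, so
they can be reduced mod 3, and for `ℓ ≡ 0`, `m ≡ n ≡ 1 (mod 3)` none of the nine residue pairs
`(a, b)` solves both.
-/

section Palindromic

variable {R : Type*} [Semiring R]

noncomputable def palindromicQuartic (a b : R) : R[X] :=
  1 + C a * X + C b * X ^ 2 + C a * X ^ 3 + X ^ 4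

noncomputable def palindromicCofactor (c₁ c₂ c₃ c₄ c₅ c₆ c₇ : R) : R[X] :=
  1 + C c₁ * X + C c₂ * X ^ 2 + C c₃ * X ^ 3 + C c₄ * X ^ 4 + C c₅ * X ^ 5 + C c₆ * X ^ 6
    + C c₇ * X ^ 7 + C c₆ * X ^ 8 + C c₅ * X ^ 9 + C c₄ * X ^ 10 + C c₃ * X ^ 11
    + C c₂ * X ^ 12 + C c₁ * X ^ 13 + X ^ 14

theorem coeff_palindromicQuartic_mul (a b : R) (p : R[X]) (k : ℕ) :
    (palindromicQuartic a b * p).coeff (k + 4)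
      = p.coeff (k + 4) + a * p.coeff (k + 3) + b * p.coeff (k + 2) + a * p.coeff (k + 1)
        + p.coeff k := by
  simp only [palindromicQuartic, add_mul, one_mul, mul_assoc, coeff_add, coeff_C_mul]
  rw [show k + 4 = k + 3 + 1 from rfl, coeff_X_mul, show k + 3 = k + 1 + 2 from rfl,
    coeff_X_pow_mul, show k + 1 + 2 = k + 3 from rfl, show k + 4 = k + 1 + 3 from rfl,
    coeff_X_pow_mul, coeff_X_pow_mul]

theorem palindromicCofactor_eq_sum (c : ℕ → R) :
    1 + (∑ k ∈ Finset.Icc 1 7, C (c k) * X ^ k)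
        + (∑ k ∈ Finset.Icc 1 6, C (c (7 - k)) * X ^ (k + 7)) + X ^ 14
      = palindromicCofactor (c 1) (c 2) (c 3) (c 4) (c 5) (c 6) (c 7) := by
  simp only [palindromicCofactor, Finset.sum_Icc_succ_top (show 1 ≤ _ by norm_num),
    Finset.Icc_self, Finset.sum_singleton, pow_one]
  abel

end Palindromic

theorem fcons_eq_zero_and_gcons_eq_zero_of_Q_eq_mul {l m n a b c₁ c₂ c₃ c₄ c₅ c₆ c₇ : ℤ}
    (h : Q l m n = palindromicQuartic a b * palindromicCofactor c₁ c₂ c₃ c₄ c₅ c₆ c₇) :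
    fcons l m n a b = 0 ∧ gcons l m n a b = 0 := by
  -- Read from the top, the coefficient of `X ^ (17 - i)` is `q = (terms in c₁, …, cᵢ₋₁) + cᵢ`.
  have e (k : ℕ) := congrArg (coeff · (k + 4)) h
  simp only [coeff_palindromicQuartic_mul] at e
  have e₁ := e 13; have e₂ := e 12; have e₃ := e 11; have e₄ := e 10; have e₅ := e 9
  have e₆ := e 8; have e₇ := e 7; have e₈ := e 6; have e₉ := e 5
  simp only [Q, palindromicCofactor, coeff_add, coeff_sub, coeff_C_mul, coeff_X_pow, coeff_X,
    coeff_one] at e₁ e₂ e₃ e₄ e₅ e₆ e₇ e₈ e₉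
  norm_num at e₁ e₂ e₃ e₄ e₅ e₆ e₇ e₈ e₉
  obtain rfl : c₁ = _ := eq_sub_of_add_eq' e₁.symm
  obtain rfl : c₂ = _ := eq_sub_of_add_eq' e₂.symm
  obtain rfl : c₃ = _ := eq_sub_of_add_eq' e₃.symm
  obtain rfl : c₄ = _ := eq_sub_of_add_eq' e₄.symm
  obtain rfl : c₅ = _ := eq_sub_of_add_eq' e₅.symm
  obtain rfl : c₆ = _ := eq_sub_of_add_eq' e₆.symm
  obtain rfl : c₇ = _ := eq_sub_of_add_eq' e₇.symm
  constructor
  · unfold fcons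
    linear_combination -e₈
  · unfold gcons
    linear_combination -e₉

section ModEq

variable {k l m n a b l' m' n' a' b' : ℤ}

theorem fcons_modEq (hl : l ≡ l' [ZMOD k]) (hm : m ≡ m' [ZMOD k]) (hn : n ≡ n' [ZMOD k])
    (ha : a ≡ a' [ZMOD k]) (hb : b ≡ b' [ZMOD k]) :
    fcons l m n a b ≡ fcons l' m' n' a' b' [ZMOD k] := by
  unfold fcons
  gcongr

theorem gcons_modEq (hl : l ≡ l' [ZMOD k]) (hm : m ≡ m' [ZMOD k]) (hn : n ≡ n' [ZMOD k])
    (ha : a ≡ a' [ZMOD k]) (hb : b ≡ b' [ZMOD k]) :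
    gcons l m n a b ≡ gcons l' m' n' a' b' [ZMOD k] := by
  unfold gcons
  gcongr

end ModEq

theorem not_fcons_modEq_zero_and_gcons_modEq_zero {r s : ℤ} (hr₀ : 0 ≤ r) (hr : r < 3)
    (hs₀ : 0 ≤ s) (hs : s < 3) :
    ¬ (fcons 0 1 1 r s ≡ 0 [ZMOD 3] ∧ gcons 0 1 1 r s ≡ 0 [ZMOD 3]) := by
  interval_cases r <;> interval_cases s <;> decide

theorem not_fcons_eq_zero_and_gcons_eq_zero {l m n : ℤ} (hl : l ≡ 0 [ZMOD 3])
    (hm : m ≡ 1 [ZMOD 3]) (hn : n ≡ 1 [ZMOD 3]) (a b : ℤ) :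
    ¬ (fcons l m n a b = 0 ∧ gcons l m n a b = 0) := by
  rintro ⟨hf, hg⟩
  have ha := (Int.mod_modEq a 3).symm
  have hb := (Int.mod_modEq b 3).symm
  refine not_fcons_modEq_zero_and_gcons_modEq_zero (Int.emod_nonneg a three_ne_zero)
    (Int.emod_lt_of_pos a three_pos) (Int.emod_nonneg b three_ne_zero)
    (Int.emod_lt_of_pos b three_pos) ⟨?_, ?_⟩
  · exact hf ▸ (fcons_modEq hl hm hn ha hb).symm
  · exact hg ▸ (gcons_modEq hl hm hn ha hb).symm

theorem stmt_19 (n : ℕ) (hn : n % 3 = 1) :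
    (¬ ∃ a b : ℤ, fcons 0 (n : ℤ) (n : ℤ) a b = 0 ∧ gcons 0 (n : ℤ) (n : ℤ) a b = 0) ∧
    ¬ ∃ (a b : ℤ) (c : ℕ → ℤ),
      Q 0 (n : ℤ) (n : ℤ)
        = (1 + C a * X + C b * X ^ 2 + C a * X ^ 3 + X ^ 4) *
          (1 + (∑ k ∈ Finset.Icc 1 7, C (c k) * X ^ k)
             + (∑ k ∈ Finset.Icc 1 6, C (c (7 - k)) * X ^ (k + 7)) + X ^ 14) := by
  have hn₃ : (n : ℤ) ≡ 1 [ZMOD 3] := by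
    unfold Int.ModEq
    omega
  have hfg : ¬ ∃ a b : ℤ, fcons 0 n n a b = 0 ∧ gcons 0 n n a b = 0 :=
    fun ⟨a, b, hab⟩ => not_fcons_eq_zero_and_gcons_eq_zero rfl hn₃ hn₃ a b hab
  refine ⟨hfg, fun ⟨a, b, c, h⟩ => hfg ⟨a, b, ?_⟩⟩
  rw [palindromicCofactor_eq_sum] at h
  exact fcons_eq_zero_and_gcons_eq_zero_of_Q_eq_mul h
end
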